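/- Let Ω₀ ⊆ ℝ^{p+1} be a domain and A₀, A₁ ∈ C^ω(Ω₀, 𝔸) real analytic functions. Then: (i) GCK[A₀] = HGCK[A₀, 0] + (1/q) HGCK[0, D_{x_p} A₀]; and (ii) if f₀ ∈ C^ω(Ω₀, 𝔸) is a solution of D_{x_p} f₀ = A₁, then HGCK[A₀, A₁] = PE(GCK[A₀]) + q · PO(GCK[f₀]). -/
import Mathlib


open scoped BigOperators
open Filter Topology

namespace GPSM

variable (A : Type*) [NormedAddCommGroup A] [NormedSpace ℝ A] [Mul A] [One A]

/-- `A` is a real alternative algebra with unit `1`, of finite dimension `d > 1`,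
equipped with an anti-involution `conj` (a real-linear map with `(a^c)^c = a`,
`(ab)^c = b^c a^c`, fixing the reals).  The associator is alternating (left/right
alternative laws). -/
structure IsAltStarAlg (conj : A → A) : Prop where
  finDim : FiniteDimensional ℝ A
  one_lt_finrank : 1 < Module.finrank ℝ A
  mul_add' : ∀ a b c : A, a * (b + c) = a * b + a * c
  add_mul' : ∀ a b c : A, (a + b) * c = a * c + b * c
  smul_mul' : ∀ (r : ℝ) (a b : A), (r • a) * b = r • (a * b)
  mul_smul' : ∀ (r : ℝ) (a b : A), a * (r • b) = r • (a * b)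
  one_mul' : ∀ a : A, 1 * a = a
  mul_one' : ∀ a : A, a * 1 = a
  alt_left : ∀ a b : A, a * (a * b) = a * a * b
  alt_right : ∀ a b : A, a * b * b = a * (b * b)
  conj_add : ∀ a b : A, conj (a + b) = conj a + conj b
  conj_smul : ∀ (r : ℝ) (a : A), conj (r • a) = r • conj a
  conj_conj : ∀ a : A, conj (conj a) = a
  conj_mul : ∀ a b : A, conj (a * b) = conj b * conj a
  conj_one : conj 1 = 1

/-- `v 0, v 1, …, v m` is a hypercomplex basis of the hypercomplex subspace
`M = span(v 0, …, v m)` of `A`: `v 0 = 1`, `t(v s) = 0`, `n(v s) = 1`, the `v s`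
anticommute for distinct `s, t ∈ {1,…,m}`, they are linearly independent, and
`M` is contained in the quadratic cone `Q_A`. -/
structure IsHypBasis (conj : A → A) (v : ℕ → A) (m : ℕ) : Prop where
  v_zero : v 0 = 1
  trace_zero : ∀ s, 1 ≤ s → s ≤ m → v s + conj (v s) = 0
  norm_one : ∀ s, 1 ≤ s → s ≤ m → v s * conj (v s) = 1
  anticomm : ∀ s t, 1 ≤ s → s ≤ m → 1 ≤ t → t ≤ m → s ≠ t → v s * v t = -(v t * v s)
  indep : LinearIndependent ℝ (fun i : Fin (m + 1) => v i)
  mem_cone : ∀ x ∈ Submodule.span ℝ (Set.range fun i : Fin (m + 1) => v (i : ℕ)),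
      ∃ tr nr : ℝ, x + conj x = tr • (1 : A) ∧ x * conj x = nr • (1 : A) ∧
        ((∃ r : ℝ, x = r • (1 : A)) ∨ tr ^ 2 < 4 * nr)

variable {A}

/-- Identification of `ℝ^{m+1}` with the hypercomplex subspace `M`:
`(x_0,…,x_m) ↦ Σ x_s • v s`. -/
def emb (v : ℕ → A) (m : ℕ) (x : Fin (m + 1) → ℝ) : A :=
  ∑ s : Fin (m + 1), x s • v (s : ℕ)

/-- First `p+1` coordinates of a point of `M ≅ ℝ^{m+1}`, i.e. the `x_p`-part. -/
def projP (m p : ℕ) (x : Fin (m + 1) → ℝ) : Fin (p + 1) → ℝ := fun s =>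
  if h : (s : ℕ) < m + 1 then x ⟨(s : ℕ), h⟩ else 0

/-- Inclusion `ℝ^{p+1} ⊆ ℝ^{m+1}` (remaining coordinates `0`). -/
def injP (m p : ℕ) (y : Fin (p + 1) → ℝ) : Fin (m + 1) → ℝ := fun s =>
  if h : (s : ℕ) < p + 1 then y ⟨(s : ℕ), h⟩ else 0

/-- The coordinates of `x_q` (last `q = m - p` coordinates of `x`). -/
def xqpart (m p : ℕ) (x : Fin (m + 1) → ℝ) : Fin (m + 1) → ℝ := fun s =>
  if (s : ℕ) ≤ p then 0 else x s

/-- The coordinates of `x_p` inside `ℝ^{m+1}`. -/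
def xppart (m p : ℕ) (x : Fin (m + 1) → ℝ) : Fin (m + 1) → ℝ := fun s =>
  if (s : ℕ) ≤ p then x s else 0

/-- `r = |x_q|`. -/
noncomputable def rad (m p : ℕ) (x : Fin (m + 1) → ℝ) : ℝ :=
  Real.sqrt (∑ s : Fin (m + 1), (xqpart m p x s) ^ 2)

/-- `ω = x_q / |x_q|` (coordinates), `0` when `x_q = 0`. -/
noncomputable def normq (m p : ℕ) (x : Fin (m + 1) → ℝ) : Fin (m + 1) → ℝ :=
  (rad m p x)⁻¹ • xqpart m p x

/-- The reflection `x = x_p + x_q ↦ x_⋄ = x_p - x_q`. -/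
def reflP (m p : ℕ) (x : Fin (m + 1) → ℝ) : Fin (m + 1) → ℝ := fun s =>
  if (s : ℕ) ≤ p then x s else -x s

/-- The sphere `𝕊 = {x_q ∈ span(v_{p+1},…,v_m) : x_q² = -1}`, in coordinates. -/
def Sph (v : ℕ → A) (m p : ℕ) : Set (Fin (m + 1) → ℝ) :=
  {w | (∀ s : Fin (m + 1), (s : ℕ) ≤ p → w s = 0) ∧ emb v m w * emb v m w = -1}

/-- The point `x_p + r ω` of `M ≅ ℝ^{m+1}`. -/
def pt (m p : ℕ) (w : Fin (m + 1) → ℝ) (y : Fin (p + 1) → ℝ) (r : ℝ) :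
    Fin (m + 1) → ℝ :=
  injP m p y + r • w

/-- The slice `Ω_ω ⊆ ℝ^{p+2}` of `Ω` at `ω`. -/
def sliceSet (m p : ℕ) (Ω : Set (Fin (m + 1) → ℝ)) (w : Fin (m + 1) → ℝ) :
    Set ((Fin (p + 1) → ℝ) × ℝ) := {z | pt m p w z.1 z.2 ∈ Ω}

/-- The restriction `f_ω` of `f` to the slice at `ω`, as a function on `ℝ^{p+2}`. -/
def sliceFun (m p : ℕ) (f : (Fin (m + 1) → ℝ) → A) (w : Fin (m + 1) → ℝ) :
    (Fin (p + 1) → ℝ) × ℝ → A := fun z => f (pt m p w z.1 z.2)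

/-- Partial derivative `∂_{x_s}` of a function on `ℝ^{m+1}`. -/
noncomputable def pdF (m : ℕ) (s : Fin (m + 1)) (f : (Fin (m + 1) → ℝ) → A)
    (x : Fin (m + 1) → ℝ) : A := fderiv ℝ f x (Pi.single s 1)

/-- Partial derivative `∂_{x_s}` of a function on `ℝ^{p+1}`. -/
noncomputable def pdP (p : ℕ) (s : Fin (p + 1)) (g : (Fin (p + 1) → ℝ) → A)
    (y : Fin (p + 1) → ℝ) : A := fderiv ℝ g y (Pi.single s 1)

/-- Partial derivative `∂_{x_s}` of a function on `ℝ^{p+2} = ℝ^{p+1} × ℝ`. -/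
noncomputable def pdSx (p : ℕ) (s : Fin (p + 1)) (G : (Fin (p + 1) → ℝ) × ℝ → A)
    (z : (Fin (p + 1) → ℝ) × ℝ) : A := fderiv ℝ G z (Pi.single s 1, 0)

/-- Partial derivative `∂_r` of a function on `ℝ^{p+2} = ℝ^{p+1} × ℝ`. -/
noncomputable def pdSr (p : ℕ) (G : (Fin (p + 1) → ℝ) × ℝ → A)
    (z : (Fin (p + 1) → ℝ) × ℝ) : A := fderiv ℝ G z (0, 1)

/-- Second partial derivative `∂_r²`. -/
noncomputable def pdSr2 (p : ℕ) (G : (Fin (p + 1) → ℝ) × ℝ → A)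
    (z : (Fin (p + 1) → ℝ) × ℝ) : A := pdSr p (pdSr p G) z

/-- The operator `Σ_{lo ≤ s ≤ hi} v_s ∂_{x_s}` on functions on `ℝ^{m+1}`.
`Dop v m 0 p` is `D_{x_p}`, `Dop v m (p+1) m` is `D_{x_q}`, `Dop v m 0 m` is `D_x`. -/
noncomputable def Dop (v : ℕ → A) (m lo hi : ℕ) (f : (Fin (m + 1) → ℝ) → A)
    (x : Fin (m + 1) → ℝ) : A :=
  ∑ s : Fin (m + 1), if lo ≤ (s : ℕ) ∧ (s : ℕ) ≤ hi then v (s : ℕ) * pdF m s f x else 0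

/-- The conjugate operator `∂_{x_0} - Σ_{1 ≤ s ≤ hi} v_s ∂_{x_s}` on functions on
`ℝ^{m+1}`; `Dbarop v m p` is `D̄_{x_p}`, `Dbarop v m m` is `D̄_x`. -/
noncomputable def Dbarop (v : ℕ → A) (m hi : ℕ) (f : (Fin (m + 1) → ℝ) → A)
    (x : Fin (m + 1) → ℝ) : A :=
  pdF m 0 f x -
    ∑ s : Fin (m + 1), if 1 ≤ (s : ℕ) ∧ (s : ℕ) ≤ hi then v (s : ℕ) * pdF m s f x else 0

/-- The operator `D_{x_p} = Σ_{s=0}^p v_s ∂_{x_s}` on functions on `ℝ^{p+1}`. -/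
noncomputable def DopP (v : ℕ → A) (p : ℕ) (g : (Fin (p + 1) → ℝ) → A)
    (y : Fin (p + 1) → ℝ) : A :=
  ∑ s : Fin (p + 1), v (s : ℕ) * pdP p s g y

/-- The operator `D̄_{x_p} = ∂_{x_0} - Σ_{s=1}^p v_s ∂_{x_s}` on functions on `ℝ^{p+1}`. -/
noncomputable def DbaropP (v : ℕ → A) (p : ℕ) (g : (Fin (p + 1) → ℝ) → A)
    (y : Fin (p + 1) → ℝ) : A :=
  pdP p 0 g y - ∑ s : Fin (p + 1), if 1 ≤ (s : ℕ) then v (s : ℕ) * pdP p s g y else 0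

/-- The operator `D_{x_p}` on functions on `ℝ^{p+2} = ℝ^{p+1} × ℝ`. -/
noncomputable def DopSx (v : ℕ → A) (p : ℕ) (G : (Fin (p + 1) → ℝ) × ℝ → A)
    (z : (Fin (p + 1) → ℝ) × ℝ) : A :=
  ∑ s : Fin (p + 1), v (s : ℕ) * pdSx p s G z

/-- The operator `D̄_{x_p}` on functions on `ℝ^{p+2} = ℝ^{p+1} × ℝ`. -/
noncomputable def DbaropSx (v : ℕ → A) (p : ℕ) (G : (Fin (p + 1) → ℝ) × ℝ → A)
    (z : (Fin (p + 1) → ℝ) × ℝ) : A :=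
  pdSx p 0 G z - ∑ s : Fin (p + 1), if 1 ≤ (s : ℕ) then v (s : ℕ) * pdSx p s G z else 0

/-- The Laplacian `Δ_x` on functions on `ℝ^{m+1}`. -/
noncomputable def lapF (m : ℕ) (f : (Fin (m + 1) → ℝ) → A)
    (x : Fin (m + 1) → ℝ) : A :=
  ∑ s : Fin (m + 1), pdF m s (pdF m s f) x

/-- The Laplacian `Δ_{x_p}` on functions on `ℝ^{p+1}`. -/
noncomputable def lapP (p : ℕ) (g : (Fin (p + 1) → ℝ) → A)
    (y : Fin (p + 1) → ℝ) : A :=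
  ∑ s : Fin (p + 1), pdP p s (pdP p s g) y

/-- Iterated Laplacian `Δ_x^k`. -/
noncomputable def lapIterF (m k : ℕ) (f : (Fin (m + 1) → ℝ) → A) :
    (Fin (m + 1) → ℝ) → A :=
  (fun g => lapF m g)^[k] f

/-- Iterated Laplacian `Δ_{x_p}^k`. -/
noncomputable def lapIterP (p k : ℕ) (g : (Fin (p + 1) → ℝ) → A) :
    (Fin (p + 1) → ℝ) → A :=
  (fun h => lapP p h)^[k] g

/-- The Laplacian `Δ_{x'} = Δ_{x_p} + ∂_r²` on functions on `ℝ^{p+2}`. -/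
noncomputable def lapSx (p : ℕ) (G : (Fin (p + 1) → ℝ) × ℝ → A)
    (z : (Fin (p + 1) → ℝ) × ℝ) : A :=
  (∑ s : Fin (p + 1), pdSx p s (pdSx p s G) z) + pdSr2 p G z

/-- The slice Cauchy-Riemann operator `D_ω = D_{x_p} + ω ∂_r` applied to a function
on `ℝ^{p+2}`, where `ω` is given in coordinates by `w`. -/
noncomputable def DomCR (v : ℕ → A) (m p : ℕ) (w : Fin (m + 1) → ℝ)
    (G : (Fin (p + 1) → ℝ) × ℝ → A) (z : (Fin (p + 1) → ℝ) × ℝ) : A :=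
  DopSx v p G z + emb v m w * pdSr p G z

/-- `f` is left generalized partial-slice monogenic (of type `(p, m-p)`) on `Ω`. -/
def GSM (v : ℕ → A) (m p : ℕ) (f : (Fin (m + 1) → ℝ) → A)
    (Ω : Set (Fin (m + 1) → ℝ)) : Prop :=
  ∀ w ∈ Sph v m p, ContDiffOn ℝ 1 (sliceFun m p f w) (sliceSet m p Ω w) ∧
    ∀ z ∈ sliceSet m p Ω w, DomCR v m p w (sliceFun m p f w) z = 0

/-- `Ω` is partially symmetric with respect to `ℝ^{p+1}`. -/
def PSym (v : ℕ → A) (m p : ℕ) (Ω : Set (Fin (m + 1) → ℝ)) : Prop :=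
  ∀ x ∈ Ω, ∀ w ∈ Sph v m p, xppart m p x + rad m p x • w ∈ Ω

/-- `Ω` is a slice domain: a domain meeting `ℝ^{p+1}` all of whose slices are
domains in `ℝ^{p+2}`. -/
def SliceDomain (v : ℕ → A) (m p : ℕ) (Ω : Set (Fin (m + 1) → ℝ)) : Prop :=
  IsOpen Ω ∧ IsConnected Ω ∧ (∃ x ∈ Ω, xqpart m p x = 0) ∧
    ∀ w ∈ Sph v m p, IsConnected (sliceSet m p Ω w)

/-- The reflection `(x_p, r) ↦ (x_p, -r)` of `ℝ^{p+2}`. -/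
def reflD (p : ℕ) (z : (Fin (p + 1) → ℝ) × ℝ) : (Fin (p + 1) → ℝ) × ℝ := (z.1, -z.2)

/-- The p-symmetric completion `Ω_D ⊆ M` of `D ⊆ ℝ^{p+2}`. -/
def OmegaD (v : ℕ → A) (m p : ℕ) (D : Set ((Fin (p + 1) → ℝ) × ℝ)) :
    Set (Fin (m + 1) → ℝ) :=
  {x | ∃ w ∈ Sph v m p, ∃ z ∈ D, x = pt m p w z.1 z.2}

/-- `(F₁, F₂)` satisfies the even-odd (stem function) conditions on `D`. -/
def IsStem (p : ℕ) (D : Set ((Fin (p + 1) → ℝ) × ℝ))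
    (F₁ F₂ : (Fin (p + 1) → ℝ) × ℝ → A) : Prop :=
  ∀ z ∈ D, F₁ (reflD p z) = F₁ z ∧ F₂ (reflD p z) = -F₂ z

/-- `f` is the generalized partial-slice function induced by the stem `(F₁, F₂)`:
`f(x_p + rω) = F₁(x_p, r) + ω F₂(x_p, r)`. -/
def Induced (v : ℕ → A) (m p : ℕ) (D : Set ((Fin (p + 1) → ℝ) × ℝ))
    (F₁ F₂ : (Fin (p + 1) → ℝ) × ℝ → A) (f : (Fin (m + 1) → ℝ) → A) : Prop :=
  ∀ w ∈ Sph v m p, ∀ z ∈ D, f (pt m p w z.1 z.2) = F₁ z + emb v m w * F₂ z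

/-- The generalized Cauchy-Riemann system for the stem `(F₁, F₂)` on `D`. -/
def StemCR (v : ℕ → A) (p : ℕ) (D : Set ((Fin (p + 1) → ℝ) × ℝ))
    (F₁ F₂ : (Fin (p + 1) → ℝ) × ℝ → A) : Prop :=
  ∀ z ∈ D, DopSx v p F₁ z - pdSr p F₂ z = 0 ∧ DbaropSx v p F₂ z + pdSr p F₁ z = 0

/-- `f` is generalized partial-slice regular on `Ω_D`. -/
def MemGSR (v : ℕ → A) (m p : ℕ) (D : Set ((Fin (p + 1) → ℝ) × ℝ))
    (f : (Fin (m + 1) → ℝ) → A) : Prop :=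
  ∃ F₁ F₂ : (Fin (p + 1) → ℝ) × ℝ → A, IsStem p D F₁ F₂ ∧
    ContDiffOn ℝ 1 F₁ D ∧ ContDiffOn ℝ 1 F₂ D ∧
    Induced v m p D F₁ F₂ f ∧ StemCR v p D F₁ F₂

/-- `f` is a generalized partial-slice function on `Ω`. -/
def MemGS (v : ℕ → A) (m p : ℕ) (Ω : Set (Fin (m + 1) → ℝ))
    (f : (Fin (m + 1) → ℝ) → A) : Prop :=
  ∃ F₁ F₂ : (Fin (p + 1) → ℝ) × ℝ → A,
    (∀ z : (Fin (p + 1) → ℝ) × ℝ, F₁ (reflD p z) = F₁ z ∧ F₂ (reflD p z) = -F₂ z) ∧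
    ∀ x ∈ Ω, f x = F₁ (projP m p x, rad m p x) +
      emb v m (normq m p x) * F₂ (projP m p x, rad m p x)

/-- Non-associative power: `a^n` with products taken from the right. -/
def apow (a : A) (n : ℕ) : A := (fun b => a * b)^[n] 1

/-- Partial even part `PE[f](x) = (f(x) + f(x_⋄))/2`. -/
noncomputable def PE (m p : ℕ) (f : (Fin (m + 1) → ℝ) → A)
    (x : Fin (m + 1) → ℝ) : A := (2 : ℝ)⁻¹ • (f x + f (reflP m p x))

/-- Partial odd part `PO[f](x) = (f(x) - f(x_⋄))/2`. -/
noncomputable def PO (m p : ℕ) (f : (Fin (m + 1) → ℝ) → A)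
    (x : Fin (m + 1) → ℝ) : A := (2 : ℝ)⁻¹ • (f x - f (reflP m p x))

/-- `Ω₀* = {x_p + x_q : x_p ∈ Ω₀, x_q ∈ ℝ^q}`. -/
def Omega0star (m p : ℕ) (Ω₀ : Set (Fin (p + 1) → ℝ)) : Set (Fin (m + 1) → ℝ) :=
  {x | projP m p x ∈ Ω₀}

/-- The spherical derivative `f'_s(x) = (1/2) x_q⁻¹ (f(x) - f(x_⋄))`
(using `x_q⁻¹ = -x_q/|x_q|²`). -/
noncomputable def sder (v : ℕ → A) (m p : ℕ) (f : (Fin (m + 1) → ℝ) → A)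
    (x : Fin (m + 1) → ℝ) : A :=
  -(((2 : ℝ) * rad m p x ^ 2)⁻¹) • (emb v m (xqpart m p x) * (f x - f (reflP m p x)))

/-- The spherical Dirac operator
`Γ f = -(1/2) Σ_{p+1 ≤ i,j ≤ m} v_i (v_j (L_{ij} f))`. -/
noncomputable def sphericalGamma (v : ℕ → A) (m p : ℕ) (f : (Fin (m + 1) → ℝ) → A)
    (x : Fin (m + 1) → ℝ) : A :=
  -((2 : ℝ)⁻¹) • ∑ i : Fin (m + 1), ∑ j : Fin (m + 1),
    if p < (i : ℕ) ∧ p < (j : ℕ) then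
      v (i : ℕ) * (v (j : ℕ) * (x i • pdF m j f x - x j • pdF m i f x)) else 0

/-- The slice Cauchy-Riemann operator `D_ω` applied to (the slice restriction of) a
function `f` on `M`, at the point `x` (with `ω = x_q/|x_q|`). -/
noncomputable def DomCRat (v : ℕ → A) (m p : ℕ) (f : (Fin (m + 1) → ℝ) → A)
    (x : Fin (m + 1) → ℝ) : A :=
  DomCR v m p (normq m p x) (sliceFun m p f (normq m p x)) (projP m p x, rad m p x)

/-- `f` is left monogenic on `Ω`: `f ∈ C¹` and `D_x f = 0`. -/
def Monogenic (v : ℕ → A) (m : ℕ) (f : (Fin (m + 1) → ℝ) → A)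
    (Ω : Set (Fin (m + 1) → ℝ)) : Prop :=
  ContDiffOn ℝ 1 f Ω ∧ ∀ x ∈ Ω, Dop v m 0 m f x = 0

/-- `f` is harmonic on `Ω`: `f ∈ C²` and `Δ_x f = 0`. -/
def Harmonic (m : ℕ) (f : (Fin (m + 1) → ℝ) → A)
    (Ω : Set (Fin (m + 1) → ℝ)) : Prop :=
  ContDiffOn ℝ 2 f Ω ∧ ∀ x ∈ Ω, lapF m f x = 0

/-- A family of functions converges normally (locally a summable uniform bound). -/
def NormallyConvOn {E F : Type*} [TopologicalSpace E] [NormedAddCommGroup F]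
    (u : ℕ → E → F) (s : Set E) : Prop :=
  ∀ x ∈ s, ∃ U ∈ nhds x, ∃ c : ℕ → ℝ, Summable c ∧ ∀ k : ℕ, ∀ y ∈ U, ‖u k y‖ ≤ c k

/-- The generalized partial-slice CK-extension
`CK[f₀](x) = Σ_k (r^{2k}/(2k)!)(-Δ_{x_p})^k f₀(x_p)
  + ω Σ_k (r^{2k+1}/(2k+1)!)(-Δ_{x_p})^k (D_{x_p} f₀)(x_p)`. -/
noncomputable def CKe (v : ℕ → A) (m p : ℕ) (f₀ : (Fin (p + 1) → ℝ) → A)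
    (x : Fin (m + 1) → ℝ) : A :=
  (∑' k : ℕ, (((-1 : ℝ) ^ k * rad m p x ^ (2 * k)) / (2 * k).factorial) •
      lapIterP p k f₀ (projP m p x)) +
  emb v m (normq m p x) *
    ∑' k : ℕ, (((-1 : ℝ) ^ k * rad m p x ^ (2 * k + 1)) / (2 * k + 1).factorial) •
      lapIterP p k (DopP v p f₀) (projP m p x)

/-- The coefficient `Γ(q/2)(-1)^k r^{2k} / (2^{2k} k! Γ(k + q/2))`. -/
noncomputable def hgckC (q k : ℕ) (r : ℝ) : ℝ :=
  (Real.Gamma ((q : ℝ) / 2) * (-1) ^ k * r ^ (2 * k)) /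
    (2 ^ (2 * k) * (k.factorial : ℝ) * Real.Gamma ((k : ℝ) + (q : ℝ) / 2))

/-- The coefficient `Γ(q/2)(-1)^k r^{2k} / (2^{2k+1} k! Γ(k + q/2 + 1))`. -/
noncomputable def gckC' (q k : ℕ) (r : ℝ) : ℝ :=
  (Real.Gamma ((q : ℝ) / 2) * (-1) ^ k * r ^ (2 * k)) /
    (2 ^ (2 * k + 1) * (k.factorial : ℝ) * Real.Gamma ((k : ℝ) + (q : ℝ) / 2 + 1))

/-- The coefficient `Γ(q/2 + 1)(-1)^k r^{2k} / (2^{2k} k! Γ(k + q/2 + 1))`. -/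
noncomputable def hgckC' (q k : ℕ) (r : ℝ) : ℝ :=
  (Real.Gamma ((q : ℝ) / 2 + 1) * (-1) ^ k * r ^ (2 * k)) /
    (2 ^ (2 * k) * (k.factorial : ℝ) * Real.Gamma ((k : ℝ) + (q : ℝ) / 2 + 1))

/-- The monogenic generalized CK-extension `GCK[A₀]`. -/
noncomputable def GCKe (v : ℕ → A) (m p : ℕ) (A₀ : (Fin (p + 1) → ℝ) → A)
    (x : Fin (m + 1) → ℝ) : A :=
  (∑' k : ℕ, hgckC (m - p) k (rad m p x) • lapIterP p k A₀ (projP m p x)) +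
  emb v m (xqpart m p x) *
    ∑' k : ℕ, gckC' (m - p) k (rad m p x) • lapIterP p k (DopP v p A₀) (projP m p x)

/-- The harmonic generalized CK-extension `HGCK[A₀, A₁]`. -/
noncomputable def HGCKe (v : ℕ → A) (m p : ℕ) (A₀ A₁ : (Fin (p + 1) → ℝ) → A)
    (x : Fin (m + 1) → ℝ) : A :=
  (∑' k : ℕ, hgckC (m - p) k (rad m p x) • lapIterP p k A₀ (projP m p x)) +
  emb v m (xqpart m p x) *
    ∑' k : ℕ, hgckC' (m - p) k (rad m p x) • lapIterP p k A₁ (projP m p x)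

/-- The operator `(1/r)∂_r`, extended to `r = 0` by its limit `∂_r²` (on even
functions). -/
noncomputable def T1 (p : ℕ) (G : (Fin (p + 1) → ℝ) × ℝ → A) :
    (Fin (p + 1) → ℝ) × ℝ → A := fun z =>
  if z.2 = 0 then pdSr2 p G z else (z.2)⁻¹ • pdSr p G z

/-- The operator `∂_r ∘ (1/r)`, extended to `r = 0` by its limit `(1/2)∂_r²` (on odd
functions). -/
noncomputable def T2 (p : ℕ) (G : (Fin (p + 1) → ℝ) × ℝ → A) :
    (Fin (p + 1) → ℝ) × ℝ → A := fun z =>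
  if z.2 = 0 then (2 : ℝ)⁻¹ • pdSr2 p G z
  else fderiv ℝ (fun t : ℝ => t⁻¹ • G (z.1, t)) z.2 1

/-- `C_q(k) = (q-1)(q-3)⋯(q-2k+1)`, `C_q(0) = 1`. -/
noncomputable def cq (q k : ℕ) : ℝ :=
  ∏ i ∈ Finset.range k, ((q : ℝ) - (2 * (i : ℝ) + 1))

/-- Double factorial. -/
def dfac : ℕ → ℕ
  | 0 => 1
  | 1 => 1
  | n + 2 => (n + 2) * dfac n

/-- The Fueter-Sce constant `γ_q = (-1)^{(q-1)/2} (q-1)!!/(q-2)!!`. -/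
noncomputable def gammaQ (q : ℕ) : ℝ :=
  (-1 : ℝ) ^ ((q - 1) / 2) * (dfac (q - 1) : ℝ) / (dfac (q - 2) : ℝ)



section AuxGCK

variable {A : Type*} [NormedAddCommGroup A] [NormedSpace ℝ A] [Mul A] [One A]
  {conj : A → A}

lemma IsAltStarAlg.mul_zero'' (H : IsAltStarAlg A conj) (a : A) : a * 0 = 0 := by
  have h := H.mul_add' a 0 0
  rw [add_zero] at h
  exact (left_eq_add.mp h)

lemma IsAltStarAlg.zero_mul'' (H : IsAltStarAlg A conj) (b : A) : 0 * b = 0 := by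
  have h := H.add_mul' 0 0 b
  rw [add_zero] at h
  exact (left_eq_add.mp h)

lemma IsAltStarAlg.neg_mul'' (H : IsAltStarAlg A conj) (a b : A) :
    (-a) * b = -(a * b) := by
  have h := H.add_mul' a (-a) b
  rw [add_neg_cancel, H.zero_mul''] at h
  exact eq_neg_of_add_eq_zero_left (by rw [add_comm]; exact h.symm)

lemma projP_reflP (m p : ℕ) (x : Fin (m + 1) → ℝ) :
    projP m p (reflP m p x) = projP m p x := by
  funext s
  have hs : (s : ℕ) ≤ p := Nat.lt_succ_iff.mp s.isLt
  simp only [projP, reflP]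
  split
  · simp [hs]
  · rfl

lemma xqpart_reflP (m p : ℕ) (x : Fin (m + 1) → ℝ) :
    xqpart m p (reflP m p x) = -(xqpart m p x) := by
  funext s
  simp only [xqpart, reflP, Pi.neg_apply]
  split <;> simp

lemma rad_reflP (m p : ℕ) (x : Fin (m + 1) → ℝ) :
    rad m p (reflP m p x) = rad m p x := by
  unfold rad
  rw [xqpart_reflP]
  simp

lemma emb_neg (v : ℕ → A) (m : ℕ) (x : Fin (m + 1) → ℝ) :
    emb v m (-x) = -emb v m x := by
  simp [emb, ← Finset.sum_neg_distrib]

lemma pdP_zero (p : ℕ) (s : Fin (p + 1)) :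
    pdP p s (0 : (Fin (p + 1) → ℝ) → A) = 0 := by
  funext y
  simp [pdP, Pi.zero_def, fderiv_const]

lemma lapP_zero (p : ℕ) : lapP p (0 : (Fin (p + 1) → ℝ) → A) = 0 := by
  funext y
  unfold lapP
  refine Finset.sum_eq_zero fun s _ => ?_
  rw [pdP_zero, pdP_zero, Pi.zero_apply]

lemma lapIterP_zero (p k : ℕ) : lapIterP p k (0 : (Fin (p + 1) → ℝ) → A) = 0 := by
  induction k with
  | zero => rfl
  | succ k ih =>
    unfold lapIterP at ih ⊢
    rw [Function.iterate_succ_apply, lapP_zero, ih]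

lemma pdP_congr_on {p : ℕ} {U : Set (Fin (p + 1) → ℝ)} (hU : IsOpen U)
    {f g : (Fin (p + 1) → ℝ) → A} (hfg : ∀ y ∈ U, f y = g y) (s : Fin (p + 1)) :
    ∀ y ∈ U, pdP p s f y = pdP p s g y := by
  intro y hy
  unfold pdP
  rw [Filter.EventuallyEq.fderiv_eq (Filter.eventuallyEq_of_mem (hU.mem_nhds hy) hfg)]

lemma lapP_congr_on {p : ℕ} {U : Set (Fin (p + 1) → ℝ)} (hU : IsOpen U)
    {f g : (Fin (p + 1) → ℝ) → A} (hfg : ∀ y ∈ U, f y = g y) :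
    ∀ y ∈ U, lapP p f y = lapP p g y := by
  intro y hy
  unfold lapP
  refine Finset.sum_congr rfl fun s _ => ?_
  exact pdP_congr_on hU (pdP_congr_on hU hfg s) s y hy

lemma lapIterP_congr_on {p : ℕ} {U : Set (Fin (p + 1) → ℝ)} (hU : IsOpen U) (k : ℕ) :
    ∀ {f g : (Fin (p + 1) → ℝ) → A}, (∀ y ∈ U, f y = g y) →
      ∀ y ∈ U, lapIterP p k f y = lapIterP p k g y := by
  induction k with
  | zero => intro f g hfg y hy; exact hfg y hy
  | succ k ih =>
    intro f g hfg y hy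
    unfold lapIterP
    rw [Function.iterate_succ_apply, Function.iterate_succ_apply]
    exact ih (lapP_congr_on hU hfg) y hy

lemma hgckC'_eq_q_mul_gckC' {q : ℕ} (hq : 0 < q) (k : ℕ) (r : ℝ) :
    hgckC' q k r = (q : ℝ) * gckC' q k r := by
  unfold hgckC' gckC'
  have hq2 : (q : ℝ) / 2 ≠ 0 := by
    have : (0 : ℝ) < q := by exact_mod_cast hq
    positivity
  rw [Real.Gamma_add_one hq2, pow_succ]
  ring

lemma gck_tsum_eq {q : ℕ} (hq : 0 < q) (r : ℝ) (L : ℕ → A) :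
    ∑' k : ℕ, gckC' q k r • L k = ((q : ℝ))⁻¹ • ∑' k : ℕ, hgckC' q k r • L k := by
  have hqR : (q : ℝ) ≠ 0 := by exact_mod_cast hq.ne'
  rw [← tsum_const_smul'' (f := fun k : ℕ => hgckC' q k r • L k) (((q : ℝ))⁻¹)]
  refine tsum_congr fun k => ?_
  rw [smul_smul, hgckC'_eq_q_mul_gckC' hq, ← mul_assoc, inv_mul_cancel₀ hqR, one_mul]

lemma hgck_tsum_eq {q : ℕ} (hq : 0 < q) (r : ℝ) (L : ℕ → A) :
    ∑' k : ℕ, hgckC' q k r • L k = ((q : ℝ)) • ∑' k : ℕ, gckC' q k r • L k := by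
  rw [← tsum_const_smul'' (f := fun k : ℕ => gckC' q k r • L k) ((q : ℝ))]
  refine tsum_congr fun k => ?_
  rw [smul_smul, ← hgckC'_eq_q_mul_gckC' hq]

lemma half_add_neg (a b : A) : (2 : ℝ)⁻¹ • ((a + b) + (a + -b)) = a := by
  have h : (a + b) + (a + -b) = (2 : ℝ) • a := by rw [two_smul]; abel
  rw [h, smul_smul]
  norm_num

lemma half_sub_neg (a b : A) : (2 : ℝ)⁻¹ • ((a + b) - (a + -b)) = b := by
  have h : (a + b) - (a + -b) = (2 : ℝ) • b := by rw [two_smul]; abel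
  rw [h, smul_smul]
  norm_num

end AuxGCK

/-- Relations between the monogenic and harmonic generalized CK-extensions:
(i) `GCK[A₀] = HGCK[A₀, 0] + (1/q) HGCK[0, D_{x_p} A₀]`;
(ii) if `D_{x_p} f₀ = A₁` then
`HGCK[A₀, A₁] = PE(GCK[A₀]) + q · PO(GCK[f₀])`. -/
theorem gck_hgck_relation
    {A : Type*} [NormedAddCommGroup A] [NormedSpace ℝ A] [Mul A] [One A]
    (conj : A → A) (H : IsAltStarAlg A conj)
    (v : ℕ → A) (m p : ℕ) (hv : IsHypBasis A conj v m) (hp : p < m)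
    (Ω₀ : Set (Fin (p + 1) → ℝ)) (hΩ₀ : IsOpen Ω₀) (hΩ₀conn : IsConnected Ω₀)
    (A₀ A₁ : (Fin (p + 1) → ℝ) → A)
    (hA₀ : AnalyticOnNhd ℝ A₀ Ω₀) (hA₁ : AnalyticOnNhd ℝ A₁ Ω₀) :
    (∀ x ∈ Omega0star m p Ω₀,
      GCKe v m p A₀ x =
        HGCKe v m p A₀ 0 x +
          (((m - p : ℕ) : ℝ))⁻¹ • HGCKe v m p 0 (DopP v p A₀) x) ∧
    (∀ f₀ : (Fin (p + 1) → ℝ) → A, AnalyticOnNhd ℝ f₀ Ω₀ →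
      (∀ y ∈ Ω₀, DopP v p f₀ y = A₁ y) →
      ∀ x ∈ Omega0star m p Ω₀,
        HGCKe v m p A₀ A₁ x =
          PE m p (GCKe v m p A₀) x +
            (((m - p : ℕ) : ℝ)) • PO m p (GCKe v m p f₀) x) := by
  have hq : 0 < m - p := Nat.sub_pos_of_lt hp
  have hqR : ((m - p : ℕ) : ℝ) ≠ 0 := by
    exact_mod_cast hq.ne'
  constructor
  · intro x hx
    simp only [GCKe, HGCKe, lapIterP_zero, Pi.zero_apply, smul_zero, tsum_zero,
      H.mul_zero'', add_zero, zero_add]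
    congr 1
    rw [← H.mul_smul']
    congr 1
    exact gck_tsum_eq hq _ _
  · intro f₀ hf₀ hDf₀ x hx
    have hy : projP m p x ∈ Ω₀ := hx
    have hL : ∀ k, lapIterP p k (DopP v p f₀) (projP m p x)
        = lapIterP p k A₁ (projP m p x) := fun k =>
      lapIterP_congr_on hΩ₀ k hDf₀ _ hy
    simp only [PE, PO, GCKe, HGCKe, projP_reflP, rad_reflP, xqpart_reflP, emb_neg,
      H.neg_mul'']
    rw [half_add_neg, half_sub_neg, ← H.mul_smul']
    congr 1
    simp only [← hL]
    congr 1
    exact hgck_tsum_eq hq _ _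

end GPSM
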